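/- Let d ≥ 1 and let T be a centrally symmetric triangulation of a convex polygon with 2d+2 vertices that contains the diagonal {0,0̄}. Let U⁻ be the centrally symmetric triangulation whose interior edges are {0,0̄}, the edges {0,x} for 2 ≤ x ≤ d, and the edges {0̄,x̄} for 2 ≤ x ≤ d. Then δ(T, U⁻) ≤ d − 1. -/

import Mathlib

namespace Cyclo

/-! Centrally symmetric triangulations of a convex polygon with `n` vertices,
labelled clockwise by `ZMod n`. -/

/-- The vertex opposite to `x` of the polygon with `n` vertices. -/
def opp (n : ℕ) (x : ZMod n) : ZMod n := x + ((n / 2 : ℕ) : ZMod n)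

/-- `e` is an edge on the polygon: a set of two distinct vertices. -/
def IsEdge (n : ℕ) (e : Finset (ZMod n)) : Prop :=
  ∃ x y : ZMod n, x ≠ y ∧ e = {x, y}

/-- `e` is a boundary edge of the polygon. -/
def IsBoundaryEdge (n : ℕ) (e : Finset (ZMod n)) : Prop :=
  ∃ x : ZMod n, e = {x, x + 1}

/-- `y` lies strictly between `x` and `z` in the clockwise cyclic order. -/
def Sbtw (n : ℕ) (x y z : ZMod n) : Prop :=
  0 < (y - x).val ∧ (y - x).val < (z - x).val

/-- Two edges cross: exactly one endpoint of one lies strictly between the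
endpoints of the other in the clockwise cyclic order. -/
def Crosses (n : ℕ) (e f : Finset (ZMod n)) : Prop :=
  ∃ a b c d : ZMod n, e = {a, b} ∧ f = {c, d} ∧ Sbtw n a c b ∧ Sbtw n b d a

/-- A triangulation: a maximal set of pairwise non-crossing edges. -/
def IsTriangulation (n : ℕ) (T : Set (Finset (ZMod n))) : Prop :=
  (∀ e ∈ T, IsEdge n e) ∧
  (∀ e ∈ T, ∀ f ∈ T, ¬ Crosses n e f) ∧
  (∀ e, IsEdge n e → (∀ f ∈ T, ¬ Crosses n e f ∧ ¬ Crosses n f e) → e ∈ T)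

/-- `T` is centrally symmetric. -/
def IsCS (n : ℕ) (T : Set (Finset (ZMod n))) : Prop :=
  ∀ x y : ZMod n, ({x, y} : Finset (ZMod n)) ∈ T →
    ({opp n x, opp n y} : Finset (ZMod n)) ∈ T

/-- `T` is a centrally symmetric triangulation. -/
def IsCST (n : ℕ) (T : Set (Finset (ZMod n))) : Prop :=
  IsTriangulation n T ∧ IsCS n T

/-- `T'` is obtained from `T` by flipping the interior edge `{x,x'}` (and its
centrally symmetric copy `{x̄,x̄'}`): the four boundary edges of the quadrilateral
with diagonal `{x,x'}` belong to `T`, and `{x,x'}`, `{x̄,x̄'}` are replaced by the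
opposite diagonals `{y,y'}`, `{ȳ,ȳ'}`. -/
def IsFlip (n : ℕ) (T T' : Set (Finset (ZMod n))) : Prop :=
  IsCST n T ∧ IsCST n T' ∧
  ∃ x x' y y' : ZMod n,
    ¬ IsBoundaryEdge n {x, x'} ∧
    ({x, x'} : Finset (ZMod n)) ∈ T ∧ ({x, y} : Finset (ZMod n)) ∈ T ∧
    ({y, x'} : Finset (ZMod n)) ∈ T ∧ ({x', y'} : Finset (ZMod n)) ∈ T ∧
    ({y', x} : Finset (ZMod n)) ∈ T ∧
    T' = (T \ {({x, x'} : Finset (ZMod n)), {opp n x, opp n x'}}) ∪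
         {({y, y'} : Finset (ZMod n)), {opp n y, opp n y'}}

/-- The flip graph (on all sets of edges; non-triangulations are isolated vertices). -/
def flipGraph (n : ℕ) : SimpleGraph (Set (Finset (ZMod n))) :=
  SimpleGraph.fromRel (IsFlip n)

/-- The flip distance of two centrally symmetric triangulations. -/
noncomputable def delta (n : ℕ) (T T' : Set (Finset (ZMod n))) : ℕ := (flipGraph n).dist T T'

/-- The flip graph on the centrally symmetric triangulations of the `n`-gon;
it is isomorphic to the graph of the `(n/2 - 1)`-dimensional cyclohedron. -/
def flipGraphCS (n : ℕ) : SimpleGraph {T : Set (Finset (ZMod n)) // IsCST n T} :=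
  SimpleGraph.fromRel fun T T' => IsFlip n T.1 T'.1

/-- `g 0, …, g k` is a geodesic from `Tm` to `Tp`. -/
def IsGeodesic (n : ℕ) (Tm Tp : Set (Finset (ZMod n)))
    (g : ℕ → Set (Finset (ZMod n))) (k : ℕ) : Prop :=
  g 0 = Tm ∧ g k = Tp ∧ (∀ i < k, (flipGraph n).Adj (g i) (g (i + 1))) ∧
    k = delta n Tm Tp

/-- The flip transforming `T` into `T'` is incident to the boundary edge `{p,q}`:
it removes `{p,r}` or `{q,r}`, where `r` is the apex of the triangle of `T` on `{p,q}`. -/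
def FlipIncident (n : ℕ) (T T' : Set (Finset (ZMod n))) (p q : ZMod n) : Prop :=
  ∃ r : ZMod n, ({p, r} : Finset (ZMod n)) ∈ T ∧ ({q, r} : Finset (ZMod n)) ∈ T ∧
    (({p, r} : Finset (ZMod n)) ∉ T' ∨ ({q, r} : Finset (ZMod n)) ∉ T')

/-- The number of flips along the path `g 0, …, g k` incident to `{p,q}`. -/
noncomputable def incidentCount (n : ℕ) (g : ℕ → Set (Finset (ZMod n))) (k : ℕ) (p q : ZMod n) : ℕ :=
  Nat.card {i : Fin k // FlipIncident n (g i.1) (g (i.1 + 1)) p q}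

/-- `x`, `y`, `z` are the vertices of a triangle of `T`. -/
def IsTriangleOf (n : ℕ) (T : Set (Finset (ZMod n))) (x y z : ZMod n) : Prop :=
  ({x, y} : Finset (ZMod n)) ∈ T ∧ ({y, z} : Finset (ZMod n)) ∈ T ∧
    ({x, z} : Finset (ZMod n)) ∈ T

/-- The three edges of the triangle with vertices `x`, `y`, `z`. -/
def triEdges (n : ℕ) (x y z : ZMod n) : Set (Finset (ZMod n)) :=
  {{x, y}, {y, z}, {x, z}}

/-- Relabelling map for the deletion of vertex `p` from the polygon with `2e+2`
vertices: `p` is replaced by `q = p+1`, `p̄` by `q̄`, and the remaining `2e`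
vertices are relabelled clockwise by `ZMod (2e)` (with `q ↦ 0`), so that
opposite vertices again differ by `e`. -/
def delV (e : ℕ) (p x : ZMod (2 * e + 2)) : ZMod (2 * e) :=
  ((if (x - p).val ≤ e + 1 then (x - p).val - 1 else (x - p).val - 2 : ℕ) : ZMod (2 * e))

/-- Deletion of vertex `p` from `T`: remove the edges `{p,p+1}` and `{p̄,p̄+1}`,
replace `p` by `p+1` and `p̄` by `p̄+1` in every other edge, and relabel. -/
def delT (e : ℕ) (p : ZMod (2 * e + 2)) (T : Set (Finset (ZMod (2 * e + 2)))) :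
    Set (Finset (ZMod (2 * e))) :=
  (fun s => s.image (delV e p)) ''
    (T \ {({p, p + 1} : Finset (ZMod (2 * e + 2))),
          {opp (2 * e + 2) p, opp (2 * e + 2) p + 1}})

/-- `DelButOne h k Tm Tp p₀ Sm Sp` holds when the pair `(Sm, Sp)` is obtained from
the pair `(Tm, Tp)` by successively deleting `k` of the `k+1` consecutive vertices
`p₀, p₀+1, …, p₀+k` (all but one of them), the deletions being performed in the
successively smaller polygons with the surviving vertices keeping their cyclic order. -/
def DelButOne : (h k : ℕ) → Set (Finset (ZMod (2 * (h + k) + 2))) →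
    Set (Finset (ZMod (2 * (h + k) + 2))) → ZMod (2 * (h + k) + 2) →
    Set (Finset (ZMod (2 * h + 2))) → Set (Finset (ZMod (2 * h + 2))) → Prop
  | _, 0, Tm, Tp, _, Sm, Sp => Sm = Tm ∧ Sp = Tp
  | h, k + 1, Tm, Tp, p₀, Sm, Sp =>
      ∃ j : ℕ, j ≤ k + 1 ∧
        DelButOne h k (delT (h + k + 1) (p₀ + (j : ZMod (2 * (h + (k + 1)) + 2))) Tm)
          (delT (h + k + 1) (p₀ + (j : ZMod (2 * (h + (k + 1)) + 2))) Tp)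
          (delV (h + k + 1) (p₀ + (j : ZMod (2 * (h + (k + 1)) + 2))) p₀) Sm Sp

/-- The set of boundary edges of the polygon with `n` vertices. -/
def boundarySet (n : ℕ) : Set (Finset (ZMod n)) := {e | IsBoundaryEdge n e}

/-- Closure of a set of edges under the central symmetry. -/
def symCl (n : ℕ) (S : Set (Finset (ZMod n))) : Set (Finset (ZMod n)) :=
  S ∪ (fun e => e.image (opp n)) '' S


/-- The interior edges (up to central symmetry) of the triangulation `A⁻`. -/
def AminusInterior (b c d : ℕ) : Set (Finset (ZMod (2 * d + 2))) :=
  {({(0 : ZMod (2 * d + 2)), opp (2 * d + 2) 0} : Finset (ZMod (2 * d + 2)))} ∪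
  {e | ∃ x : ℕ, c ≤ x ∧ x ≤ d ∧
    e = ({(0 : ZMod (2 * d + 2)), (x : ZMod (2 * d + 2))} : Finset (ZMod (2 * d + 2)))} ∪
  {e | ∃ x : ℕ, b ≤ x ∧ x ≤ c ∧
    e = ({(1 : ZMod (2 * d + 2)), (x : ZMod (2 * d + 2))} : Finset (ZMod (2 * d + 2)))} ∪
  {e | ∃ i : ℕ, 2 ≤ i ∧ i ≤ (b - 1) / 2 ∧
    e = ({(i : ZMod (2 * d + 2)), ((b + 1 - i : ℕ) : ZMod (2 * d + 2))} : Finset (ZMod (2 * d + 2)))} ∪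
  {e | ∃ i : ℕ, 2 ≤ i ∧ i ≤ b / 2 ∧
    e = ({(i : ZMod (2 * d + 2)), ((b + 2 - i : ℕ) : ZMod (2 * d + 2))} : Finset (ZMod (2 * d + 2)))}

/-- The triangulation `A⁻` of the `(2d+2)`-gon: its edges are the boundary edges,
the interior edges listed in `AminusInterior`, and their centrally symmetric copies. -/
def AminusSet (b c d : ℕ) : Set (Finset (ZMod (2 * d + 2))) :=
  boundarySet (2 * d + 2) ∪ symCl (2 * d + 2) (AminusInterior b c d)

/-- The edges that any triangulation `A⁺` of an `(a,b,c,d)`-pair must contain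
(`l = a + b - d + 2`): the edges `{1,d̄}` and `{l,c̄}`, the centrally symmetric
zigzag crossing `{0,0̄}`, and the centrally symmetric copies of all of these. -/
def AplusCore (a b c d : ℕ) : Set (Finset (ZMod (2 * d + 2))) :=
  symCl (2 * d + 2)
    ({({(1 : ZMod (2 * d + 2)), opp (2 * d + 2) (d : ZMod (2 * d + 2))} : Finset (ZMod (2 * d + 2)))} ∪
     {({((a + b - d + 2 : ℕ) : ZMod (2 * d + 2)),
        opp (2 * d + 2) (c : ZMod (2 * d + 2))} : Finset (ZMod (2 * d + 2)))} ∪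
     {e | ∃ i : ℕ, a + b - d + 2 ≤ i ∧ i ≤ c ∧
       e = ({(i : ZMod (2 * d + 2)),
             opp (2 * d + 2) ((c + (a + b - d + 2) - i : ℕ) : ZMod (2 * d + 2))} : Finset (ZMod (2 * d + 2)))} ∪
     {e | ∃ i : ℕ, a + b - d + 2 ≤ i ∧ i ≤ c - 1 ∧
       e = ({(i : ZMod (2 * d + 2)),
             opp (2 * d + 2) ((c + (a + b - d + 2) - 1 - i : ℕ) : ZMod (2 * d + 2))} : Finset (ZMod (2 * d + 2)))})

/-- `T` is an admissible triangulation `A⁺` for an `(a,b,c,d)`-pair: a centrally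
symmetric triangulation containing `AplusCore`, all of whose remaining interior
edges join a vertex of `{1,…,l}` to a vertex of `{c̄,…,d̄}` or a vertex of
`{1̄,…,l̄}` to a vertex of `{c,…,d}`, and in which every vertex of `{c̄,…,d̄}` is
joined to at least two vertices of `{1,…,l}` (so combs with at least two teeth
are attached at the vertices `c̄,…,d̄` and their opposites). -/
def IsAplus (a b c d : ℕ) (T : Set (Finset (ZMod (2 * d + 2)))) : Prop :=
  IsCST (2 * d + 2) T ∧ AplusCore a b c d ⊆ T ∧
  (∀ e ∈ T, ¬ IsBoundaryEdge (2 * d + 2) e → e ∉ AplusCore a b c d →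
    ∃ i j : ℕ, 1 ≤ i ∧ i ≤ a + b - d + 2 ∧ c ≤ j ∧ j ≤ d ∧
      (e = ({(i : ZMod (2 * d + 2)), opp (2 * d + 2) (j : ZMod (2 * d + 2))} : Finset (ZMod (2 * d + 2))) ∨
       e = ({opp (2 * d + 2) (i : ZMod (2 * d + 2)), (j : ZMod (2 * d + 2))} : Finset (ZMod (2 * d + 2))))) ∧
  (∀ j : ℕ, c ≤ j → j ≤ d →
    ∃ i₁ i₂ : ℕ, 1 ≤ i₁ ∧ i₁ ≤ a + b - d + 2 ∧ 1 ≤ i₂ ∧ i₂ ≤ a + b - d + 2 ∧ i₁ ≠ i₂ ∧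
      ({(i₁ : ZMod (2 * d + 2)), opp (2 * d + 2) (j : ZMod (2 * d + 2))} : Finset (ZMod (2 * d + 2))) ∈ T ∧
      ({(i₂ : ZMod (2 * d + 2)), opp (2 * d + 2) (j : ZMod (2 * d + 2))} : Finset (ZMod (2 * d + 2))) ∈ T)

/-- `(Am, Ap)` is an `(a,b,c,d)`-pair. -/
def IsABCDPair (a b c d : ℕ) (Am Ap : Set (Finset (ZMod (2 * d + 2)))) : Prop :=
  b < c ∧ c ≤ d ∧ d ≤ a + b ∧ 2 * a + b + 2 < 2 * d ∧
  Am = AminusSet b c d ∧ IsAplus a b c d Ap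

/-- The triangulation `U⁻`: interior edges `{0,0̄}`, `{0,x}` for `2 ≤ x ≤ d`,
and `{0̄,x̄}` for `2 ≤ x ≤ d`. -/
def UminusSet (d : ℕ) : Set (Finset (ZMod (2 * d + 2))) :=
  boundarySet (2 * d + 2) ∪ symCl (2 * d + 2)
    ({({(0 : ZMod (2 * d + 2)), opp (2 * d + 2) 0} : Finset (ZMod (2 * d + 2)))} ∪
     {e | ∃ x : ℕ, 2 ≤ x ∧ x ≤ d ∧
       e = ({(0 : ZMod (2 * d + 2)), (x : ZMod (2 * d + 2))} : Finset (ZMod (2 * d + 2)))})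

/-- The triangulation `U⁺`: interior edges the diagonal `{x,x̄}`, the edges `{0,v}`
for `v ∈ {2,…,x} ∪ {x̄,…,2d}`, and their centrally symmetric copies. -/
def UplusSet (d x : ℕ) : Set (Finset (ZMod (2 * d + 2))) :=
  boundarySet (2 * d + 2) ∪ symCl (2 * d + 2)
    ({({(x : ZMod (2 * d + 2)), opp (2 * d + 2) (x : ZMod (2 * d + 2))} : Finset (ZMod (2 * d + 2)))} ∪
     {e | ∃ v : ℕ, ((2 ≤ v ∧ v ≤ x) ∨ (x + d + 1 ≤ v ∧ v ≤ 2 * d)) ∧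
       e = ({(0 : ZMod (2 * d + 2)), (v : ZMod (2 * d + 2))} : Finset (ZMod (2 * d + 2)))})

/-!
Let `k` be the least `v ∈ [2, d]` for which the spoke `{0, v}` of `U⁻` is missing from `T`, so
that `{0, k-1}` is an edge of `T`. The triangle of `T` on `{0, k-1}` on the side of `k` has its
apex `z` in `(k, d+1]`, since `{k-1, z}` cannot cross the diagonal `{0, 0̄}`, and the triangle
on the other side of `{k-1, z}` has its apex `w` in `[k, z)`. Flipping `{k-1, z}` (together with
its symmetric copy) creates the spoke `{0, w}` and destroys none, so after at most
`#[2, d] = d - 1` flips every spoke is present; a centrally symmetric triangulation containing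
`{0, 0̄}` and all spokes is `U⁻`, because it contains `U⁻` and every edge crossing no edge of
`U⁻` belongs to `U⁻`.
-/

lemma pair_eq_pair_iff {α : Type*} [DecidableEq α] {a b c d : α} :
    ({a, b} : Finset α) = {c, d} ↔ (a = c ∧ b = d) ∨ (a = d ∧ b = c) := by
  rw [← Finset.coe_inj, Finset.coe_pair, Finset.coe_pair, Set.pair_eq_pair_iff]

lemma pair_ne_pair_of_val {n : ℕ} {a b c e : ZMod n}
    (h : ¬ ((a.val = c.val ∧ b.val = e.val) ∨ (a.val = e.val ∧ b.val = c.val))) :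
    ({a, b} : Finset (ZMod n)) ≠ {c, e} := fun heq =>
  h (by rcases pair_eq_pair_iff.mp heq with ⟨rfl, rfl⟩ | ⟨rfl, rfl⟩ <;> simp)

section CyclicOrder

variable {n : ℕ}

lemma crosses_pair_iff {x y u v : ZMod n} :
    Crosses n {x, y} {u, v} ↔
      (Sbtw n x u y ∧ Sbtw n y v x) ∨ (Sbtw n x v y ∧ Sbtw n y u x) := by
  constructor
  · rintro ⟨a, b, c, e, hab, hce, h₁, h₂⟩
    rcases pair_eq_pair_iff.mp hab with ⟨rfl, rfl⟩ | ⟨rfl, rfl⟩ <;>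
      rcases pair_eq_pair_iff.mp hce with ⟨rfl, rfl⟩ | ⟨rfl, rfl⟩ <;> tauto
  · rintro (⟨h₁, h₂⟩ | ⟨h₁, h₂⟩)
    · exact ⟨x, y, u, v, rfl, rfl, h₁, h₂⟩
    · exact ⟨x, y, v, u, rfl, Finset.pair_comm _ _, h₁, h₂⟩

lemma Crosses.exists_eq_pair {e f : Finset (ZMod n)} (h : Crosses n e f) :
    (∃ x y, e = {x, y}) ∧ ∃ u v, f = {u, v} :=
  let ⟨x, y, u, v, he, hf, _⟩ := h
  ⟨⟨x, y, he⟩, u, v, hf⟩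

lemma not_crosses_self (e : Finset (ZMod n)) : ¬ Crosses n e e := by
  rintro h
  obtain ⟨⟨x, y, rfl⟩, -⟩ := h.exists_eq_pair
  simp [crosses_pair_iff, Sbtw] at h

lemma sbtw_add_right (t x y z : ZMod n) : Sbtw n (x + t) (y + t) (z + t) ↔ Sbtw n x y z := by
  simp only [Sbtw, add_sub_add_right_eq_sub]

lemma crosses_add_right_iff (t x y u v : ZMod n) :
    Crosses n {x + t, y + t} {u + t, v + t} ↔ Crosses n {x, y} {u, v} := by
  simp only [crosses_pair_iff, sbtw_add_right]

variable [NeZero n]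

lemma val_sub_eq_ite (x y : ZMod n) :
    (y - x).val = if x.val ≤ y.val then y.val - x.val else y.val + n - x.val := by
  have hx := ZMod.val_lt x
  split_ifs with h
  · exact ZMod.val_sub h
  · have hx0 : x ≠ 0 := by rintro rfl; simp at h
    rw [sub_eq_add_neg, ZMod.val_add, ZMod.neg_val, if_neg hx0, Nat.mod_eq_of_lt (by omega)]
    omega

/-- `(v - o).val` is the clockwise position of `v` seen from `o`; in such a frame of reference
cyclic betweenness becomes the order of `ℕ`. -/
lemma sbtw_iff_of_lt {o x z : ZMod n} (y : ZMod n) (h : (x - o).val < (z - o).val) :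
    Sbtw n x y z ↔ (x - o).val < (y - o).val ∧ (y - o).val < (z - o).val := by
  have hy := ZMod.val_lt (y - o)
  have hz := ZMod.val_lt (z - o)
  rw [Sbtw, show y - x = (y - o) - (x - o) by ring, show z - x = (z - o) - (x - o) by ring,
    val_sub_eq_ite, val_sub_eq_ite (x - o)]
  split_ifs <;> omega

lemma sbtw_rev_iff_of_lt {o x z : ZMod n} (y : ZMod n) (h : (x - o).val < (z - o).val) :
    Sbtw n z y x ↔ (y - o).val < (x - o).val ∨ (z - o).val < (y - o).val := by
  have hy := ZMod.val_lt (y - o)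
  have hz := ZMod.val_lt (z - o)
  rw [Sbtw, show y - z = (y - o) - (z - o) by ring, show x - z = (x - o) - (z - o) by ring,
    val_sub_eq_ite, val_sub_eq_ite (z - o)]
  split_ifs <;> omega

lemma crosses_pair_iff_of_lt {o x y : ZMod n} (u v : ZMod n) (h : (x - o).val < (y - o).val) :
    Crosses n {x, y} {u, v} ↔
      ((x - o).val < (u - o).val ∧ (u - o).val < (y - o).val ∧
          ((v - o).val < (x - o).val ∨ (y - o).val < (v - o).val)) ∨
      ((x - o).val < (v - o).val ∧ (v - o).val < (y - o).val ∧
          ((u - o).val < (x - o).val ∨ (y - o).val < (u - o).val)) := by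
  simp only [crosses_pair_iff, sbtw_iff_of_lt _ h, sbtw_rev_iff_of_lt _ h, and_assoc]

lemma crosses_pair_iff_of_val_lt {x y : ZMod n} (u v : ZMod n) (h : x.val < y.val) :
    Crosses n {x, y} {u, v} ↔
      (x.val < u.val ∧ u.val < y.val ∧ (v.val < x.val ∨ y.val < v.val)) ∨
      (x.val < v.val ∧ v.val < y.val ∧ (u.val < x.val ∨ y.val < u.val)) := by
  simpa only [sub_zero] using crosses_pair_iff_of_lt (o := 0) u v (by simpa only [sub_zero] using h)

lemma Crosses.symm {e f : Finset (ZMod n)} (h : Crosses n e f) : Crosses n f e := by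
  obtain ⟨⟨x, y, rfl⟩, u, v, rfl⟩ := h.exists_eq_pair
  have hx : (x - x).val = 0 := by simp
  rcases Nat.eq_zero_or_pos (y - x).val with hy | hy
  · simp [crosses_pair_iff, Sbtw, hy] at h
  rw [crosses_pair_iff_of_lt (o := x) u v (by omega), hx] at h
  rcases lt_trichotomy (u - x).val (v - x).val with huv | huv | huv
  · rw [crosses_pair_iff_of_lt (o := x) x y huv, hx]; omega
  · omega
  · rw [Finset.pair_comm u v, crosses_pair_iff_of_lt (o := x) x y huv, hx]; omega

lemma val_add_one [Fact (1 < n)] (x : ZMod n) :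
    (x + 1).val = if x.val + 1 = n then 0 else x.val + 1 := by
  have hx := ZMod.val_lt x
  rw [ZMod.val_add, ZMod.val_one]
  split_ifs with h
  · rw [h, Nat.mod_self]
  · exact Nat.mod_eq_of_lt (by omega)

lemma eq_pair_of_crosses_of_lt {o p q r s u v : ZMod n}
    (hpq : (p - o).val < (q - o).val) (hqr : (q - o).val < (r - o).val)
    (hrs : (r - o).val < (s - o).val) (hpr : Crosses n {p, r} {u, v})
    (hpq' : ¬ Crosses n {p, q} {u, v}) (hqr' : ¬ Crosses n {q, r} {u, v})
    (hrs' : ¬ Crosses n {r, s} {u, v}) (hps' : ¬ Crosses n {p, s} {u, v}) :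
    ({u, v} : Finset (ZMod n)) = {q, s} := by
  have eq_of_pos : ∀ a b : ZMod n, (a - o).val = (b - o).val → a = b := fun a b h =>
    sub_left_inj.mp (ZMod.val_injective n h)
  rw [crosses_pair_iff_of_lt u v (hpq.trans hqr)] at hpr
  rw [crosses_pair_iff_of_lt u v hpq] at hpq'
  rw [crosses_pair_iff_of_lt u v hqr] at hqr'
  rw [crosses_pair_iff_of_lt u v hrs] at hrs'
  rw [crosses_pair_iff_of_lt u v (hpq.trans (hqr.trans hrs))] at hps'
  rcases hpr with hpr | hpr
  · rw [eq_of_pos u q (by omega), eq_of_pos v s (by omega)]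
  · rw [eq_of_pos u s (by omega), eq_of_pos v q (by omega), Finset.pair_comm]

end CyclicOrder

section Opposite

variable {d : ℕ}

instance (d : ℕ) : Fact (1 < 2 * d + 2) := ⟨by omega⟩

lemma opp_eq_add (x : ZMod (2 * d + 2)) :
    opp (2 * d + 2) x = x + ((d + 1 : ℕ) : ZMod (2 * d + 2)) := by
  rw [opp, show (2 * d + 2) / 2 = d + 1 by omega]

lemma opp_val (x : ZMod (2 * d + 2)) :
    (opp (2 * d + 2) x).val = if x.val ≤ d then x.val + (d + 1) else x.val - (d + 1) := by
  have hx := ZMod.val_lt x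
  rw [opp_eq_add, ZMod.val_add, ZMod.val_natCast_of_lt (by omega)]
  split_ifs with h
  · rw [Nat.mod_eq_of_lt (by omega)]
  · rw [Nat.mod_eq_sub_mod (by omega), Nat.mod_eq_of_lt (by omega)]
    omega

lemma opp_opp (x : ZMod (2 * d + 2)) : opp (2 * d + 2) (opp (2 * d + 2) x) = x := by
  have hx := ZMod.val_lt x
  apply ZMod.val_injective
  rw [opp_val, opp_val]
  split_ifs <;> omega

lemma opp_eq_iff {x u : ZMod (2 * d + 2)} : opp (2 * d + 2) x = u ↔ x = opp (2 * d + 2) u :=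
  ⟨fun h => h ▸ (opp_opp x).symm, fun h => h ▸ opp_opp u⟩

lemma opp_ne_self (x : ZMod (2 * d + 2)) : opp (2 * d + 2) x ≠ x := by
  intro h
  have h' := congrArg ZMod.val h
  rw [opp_val] at h'
  split_ifs at h' <;> omega

lemma opp_sub (x y : ZMod (2 * d + 2)) : opp (2 * d + 2) x - y = opp (2 * d + 2) (x - y) := by
  simp only [opp_eq_add]
  ring

lemma opp_pair_eq_iff {x y u v : ZMod (2 * d + 2)} :
    ({opp (2 * d + 2) x, opp (2 * d + 2) y} : Finset (ZMod (2 * d + 2))) = {u, v} ↔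
      ({x, y} : Finset (ZMod (2 * d + 2))) = {opp (2 * d + 2) u, opp (2 * d + 2) v} := by
  simp only [pair_eq_pair_iff, opp_eq_iff]

lemma opp_pair_eq_or_disjoint (q s : ZMod (2 * d + 2)) :
    ({opp (2 * d + 2) q, opp (2 * d + 2) s} : Finset (ZMod (2 * d + 2))) = {q, s} ∨
      (q ∉ ({opp (2 * d + 2) q, opp (2 * d + 2) s} : Finset (ZMod (2 * d + 2))) ∧
        s ∉ ({opp (2 * d + 2) q, opp (2 * d + 2) s} : Finset (ZMod (2 * d + 2)))) := by
  by_cases hqs : q = opp (2 * d + 2) s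
  · left
    rw [hqs, opp_opp, Finset.pair_comm]
  · right
    have hsq : s ≠ opp (2 * d + 2) q := fun h => hqs (opp_eq_iff.mp h.symm)
    simp [hqs, hsq, (opp_ne_self q).symm, (opp_ne_self s).symm]

lemma crosses_opp_iff {n : ℕ} (x y u v : ZMod n) :
    Crosses n {opp n x, opp n y} {opp n u, opp n v} ↔ Crosses n {x, y} {u, v} :=
  crosses_add_right_iff _ x y u v

/-- A chord and its centrally symmetric copy are parallel. -/
lemma not_crosses_opp (x y : ZMod (2 * d + 2)) :
    ¬ Crosses (2 * d + 2) {x, y} {opp (2 * d + 2) x, opp (2 * d + 2) y} := by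
  intro h
  rcases Nat.eq_zero_or_pos (y - x).val with hy | hy
  · simp [crosses_pair_iff, Sbtw, hy] at h
  have := ZMod.val_lt (y - x)
  rw [crosses_pair_iff_of_lt (o := x) _ _ (by simpa using hy), opp_sub, opp_sub, opp_val,
    opp_val] at h
  simp only [sub_self, ZMod.val_zero] at h
  split_ifs at h <;> omega

end Opposite

section Triangulation

variable {n : ℕ} {T : Set (Finset (ZMod n))}

lemma not_crosses_boundary (x : ZMod n) (f : Finset (ZMod n)) : ¬ Crosses n {x, x + 1} f := by
  intro h
  obtain ⟨-, u, v, rfl⟩ := h.exists_eq_pair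
  have h1 : (1 : ZMod n).val ≤ 1 := by rw [ZMod.val_one_eq_one_mod]; exact Nat.mod_le 1 n
  rw [crosses_pair_iff] at h
  simp only [Sbtw, add_sub_cancel_left] at h
  omega

variable [NeZero n]

lemma IsTriangulation.mem_of_forall_not_crosses (hT : IsTriangulation n T) {e : Finset (ZMod n)}
    (he : IsEdge n e) (h : ∀ f ∈ T, ¬ Crosses n e f) : e ∈ T :=
  hT.2.2 e he fun f hf => ⟨h f hf, fun h' => h f hf h'.symm⟩

lemma IsTriangulation.boundary_mem [Fact (1 < n)] (hT : IsTriangulation n T) (x : ZMod n) :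
    {x, x + 1} ∈ T :=
  hT.mem_of_forall_not_crosses ⟨x, x + 1, (succ_ne_self x).symm, rfl⟩ fun f _ =>
    not_crosses_boundary x f

/-- The apex `z` is the vertex nearest to `x` among those strictly between `x` and `y` that are
joined to `y`. -/
lemma IsTriangulation.exists_apex (hT : IsTriangulation n T) {x y : ZMod n}
    (hxy : {x, y} ∈ T) (h2 : 2 ≤ (y - x).val) :
    ∃ z, Sbtw n x z y ∧ {x, z} ∈ T ∧ {z, y} ∈ T := by
  classical
  have : Fact (1 < n) := ⟨by have := ZMod.val_lt (y - x); omega⟩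
  have hx : (x - x).val = 0 := by simp
  have hpos : (x - x).val < (y - x).val := by omega
  obtain ⟨z, hz, hmin⟩ := Finset.exists_min_image
    (Finset.univ.filter fun v => Sbtw n x v y ∧ ({v, y} : Finset (ZMod n)) ∈ T)
    (fun v => (v - x).val) ⟨y - 1, by
      have hy1 : ((y - 1) - x).val = (y - x).val - 1 := by
        rw [show y - 1 - x = (y - x) - 1 by ring, val_sub_eq_ite, ZMod.val_one]
        split_ifs <;> omega
      refine Finset.mem_filter.mpr ⟨Finset.mem_univ _, ⟨by omega, by omega⟩, ?_⟩
      simpa using hT.boundary_mem (y - 1)⟩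
  simp only [Finset.mem_filter, Finset.mem_univ, true_and] at hz hmin
  obtain ⟨hzy, hzT⟩ := hz
  rw [sbtw_iff_of_lt z hpos, hx] at hzy
  refine ⟨z, (sbtw_iff_of_lt z hpos).mpr (by omega), ?_, hzT⟩
  have key : ∀ u v : ZMod n, {u, v} ∈ T → 0 < (u - x).val → (u - x).val < (z - x).val →
      (z - x).val < (v - x).val → False := by
    intro u v huv hu hu' hv
    rcases lt_trichotomy (v - x).val (y - x).val with hvy | hvy | hvy
    · refine hT.2.1 _ hzT _ huv ((crosses_pair_iff_of_lt (o := x) u v (by omega)).mpr ?_)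
      omega
    · obtain rfl : v = y := sub_left_inj.mp (ZMod.val_injective n hvy)
      have := hmin u ⟨(sbtw_iff_of_lt u hpos).mpr (by omega), huv⟩
      omega
    · refine hT.2.1 _ hxy _ huv ((crosses_pair_iff_of_lt (o := x) u v hpos).mpr ?_)
      omega
  refine hT.mem_of_forall_not_crosses ⟨x, z, fun h => by subst h; omega, rfl⟩ fun f hf hc => ?_
  obtain ⟨-, u, v, rfl⟩ := hc.exists_eq_pair
  rw [crosses_pair_iff_of_lt (o := x) u v (by omega), hx] at hc
  rcases hc with ⟨hu, hu', hv⟩ | ⟨hv, hv', hu⟩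
  · exact key u v hf hu hu' (by omega)
  · exact key v u (Finset.pair_comm u v ▸ hf) hv hv' (by omega)

end Triangulation

section Flip

def flipAt (n : ℕ) (T : Set (Finset (ZMod n))) (x x' y y' : ZMod n) : Set (Finset (ZMod n)) :=
  (T \ {({x, x'} : Finset (ZMod n)), {opp n x, opp n x'}}) ∪
    {({y, y'} : Finset (ZMod n)), {opp n y, opp n y'}}

/-- The triangles `p q s` and `q r s` of `T`, glued along `{q,s}`. -/
structure IsQuadrilateral (n : ℕ) (T : Set (Finset (ZMod n))) (p q r s : ZMod n) : Prop where
  lt_pq : p.val < q.val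
  lt_qr : q.val < r.val
  lt_rs : r.val < s.val
  mem_pq : {p, q} ∈ T
  mem_qr : {q, r} ∈ T
  mem_rs : {r, s} ∈ T
  mem_sp : {s, p} ∈ T
  mem_qs : {q, s} ∈ T

variable {n : ℕ} {T : Set (Finset (ZMod n))}

lemma mem_flipAt {x x' y y' : ZMod n} {e : Finset (ZMod n)} :
    e ∈ flipAt n T x x' y y' ↔
      (e ∈ T ∧ e ≠ {x, x'} ∧ e ≠ {opp n x, opp n x'}) ∨
        e = {y, y'} ∨ e = {opp n y, opp n y'} := by
  simp only [flipAt, Set.mem_union, Set.mem_sdiff, Set.mem_insert_iff, Set.mem_singleton_iff]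
  tauto

variable {p q r s : ZMod n}

lemma IsQuadrilateral.crosses [NeZero n] (hQ : IsQuadrilateral n T p q r s) :
    Crosses n {r, p} {q, s} := by
  have := hQ.lt_pq; have := hQ.lt_qr; have := hQ.lt_rs
  rw [Finset.pair_comm r p, crosses_pair_iff_of_val_lt q s (by omega)]
  omega

lemma IsQuadrilateral.eq_of_crosses [NeZero n] (hT : IsTriangulation n T)
    (hQ : IsQuadrilateral n T p q r s) {f : Finset (ZMod n)} (hf : f ∈ T)
    (hc : Crosses n {r, p} f) : f = {q, s} := by
  obtain ⟨-, u, v, rfl⟩ := hc.exists_eq_pair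
  rw [Finset.pair_comm r p] at hc
  refine eq_pair_of_crosses_of_lt (o := 0) (by simpa only [sub_zero] using hQ.lt_pq)
    (by simpa only [sub_zero] using hQ.lt_qr) (by simpa only [sub_zero] using hQ.lt_rs) hc
    (hT.2.1 _ hQ.mem_pq _ hf) (hT.2.1 _ hQ.mem_qr _ hf) (hT.2.1 _ hQ.mem_rs _ hf) ?_
  exact Finset.pair_comm p s ▸ hT.2.1 _ hQ.mem_sp _ hf

end Flip

section FlipCS

variable {d : ℕ} {T : Set (Finset (ZMod (2 * d + 2)))} {p q r s : ZMod (2 * d + 2)}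

lemma isCS_flipAt (hT : IsCS (2 * d + 2) T) (x x' y y' : ZMod (2 * d + 2)) :
    IsCS (2 * d + 2) (flipAt (2 * d + 2) T x x' y y') := by
  intro u v h
  rw [mem_flipAt] at h ⊢
  rcases h with ⟨h, hx, hx'⟩ | h | h
  · refine Or.inl ⟨hT u v h, fun h' => hx' (opp_pair_eq_iff.mp h'), fun h' => hx ?_⟩
    rw [opp_pair_eq_iff.mp h', opp_opp, opp_opp]
  · exact Or.inr (Or.inr (opp_pair_eq_iff.mpr (by rw [opp_opp, opp_opp, h])))
  · exact Or.inr (Or.inl (opp_pair_eq_iff.mpr h))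

lemma mem_flipAt_of_mem {x x' y y' : ZMod (2 * d + 2)} {e : Finset (ZMod (2 * d + 2))}
    (he : e ∈ T) (hne : e ≠ {x, x'}) (hx : x ∈ e ∨ x' ∈ e) :
    e ∈ flipAt (2 * d + 2) T x x' y y' := by
  refine mem_flipAt.mpr (Or.inl ⟨he, hne, ?_⟩)
  rintro rfl
  rcases opp_pair_eq_or_disjoint x x' with h | h
  · exact hne h
  · tauto

lemma IsQuadrilateral.sides_mem_flipAt (hQ : IsQuadrilateral (2 * d + 2) T p q r s)
    (y y' : ZMod (2 * d + 2)) :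
    {p, q} ∈ flipAt (2 * d + 2) T q s y y' ∧ {q, r} ∈ flipAt (2 * d + 2) T q s y y' ∧
      {r, s} ∈ flipAt (2 * d + 2) T q s y y' ∧ {s, p} ∈ flipAt (2 * d + 2) T q s y y' := by
  have := hQ.lt_pq; have := hQ.lt_qr; have := hQ.lt_rs
  exact ⟨mem_flipAt_of_mem hQ.mem_pq (pair_ne_pair_of_val (by omega)) (by simp),
    mem_flipAt_of_mem hQ.mem_qr (pair_ne_pair_of_val (by omega)) (by simp),
    mem_flipAt_of_mem hQ.mem_rs (pair_ne_pair_of_val (by omega)) (by simp),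
    mem_flipAt_of_mem hQ.mem_sp (pair_ne_pair_of_val (by omega)) (by simp)⟩

lemma IsQuadrilateral.eq_opp_of_crosses_opp (hT : IsCST (2 * d + 2) T)
    (hQ : IsQuadrilateral (2 * d + 2) T p q r s) {f : Finset (ZMod (2 * d + 2))} (hf : f ∈ T)
    (hc : Crosses (2 * d + 2) {opp (2 * d + 2) r, opp (2 * d + 2) p} f) :
    f = {opp (2 * d + 2) q, opp (2 * d + 2) s} := by
  obtain ⟨-, u, v, rfl⟩ := hc.exists_eq_pair
  rw [← opp_opp u, ← opp_opp v, crosses_opp_iff] at hc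
  rw [← opp_pair_eq_iff]
  exact hQ.eq_of_crosses hT.1 (hT.2 u v hf) hc

lemma IsQuadrilateral.pairwise_not_crosses_flipAt (hT : IsCST (2 * d + 2) T)
    (hQ : IsQuadrilateral (2 * d + 2) T p q r s) :
    ∀ e ∈ flipAt (2 * d + 2) T q s r p, ∀ f ∈ flipAt (2 * d + 2) T q s r p,
      ¬ Crosses (2 * d + 2) e f := by
  intro e he f hf
  rw [mem_flipAt] at he hf
  rcases he with ⟨he, he₁, he₂⟩ | rfl | rfl <;>
    rcases hf with ⟨hf, hf₁, hf₂⟩ | rfl | rfl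
  · exact hT.1.2.1 e he f hf
  · exact fun h => he₁ (hQ.eq_of_crosses hT.1 he h.symm)
  · exact fun h => he₂ (hQ.eq_opp_of_crosses_opp hT he h.symm)
  · exact fun h => hf₁ (hQ.eq_of_crosses hT.1 hf h)
  · exact not_crosses_self _
  · exact not_crosses_opp r p
  · exact fun h => hf₂ (hQ.eq_opp_of_crosses_opp hT hf h)
  · exact fun h => not_crosses_opp r p h.symm
  · exact not_crosses_self _

lemma IsQuadrilateral.eq_of_crosses_of_forall_not_crosses
    (hQ : IsQuadrilateral (2 * d + 2) T p q r s) {u v : ZMod (2 * d + 2)}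
    (h : ∀ f ∈ flipAt (2 * d + 2) T q s r p, ¬ Crosses (2 * d + 2) {u, v} f)
    (hc : Crosses (2 * d + 2) {q, s} {u, v}) : ({u, v} : Finset (ZMod (2 * d + 2))) = {r, p} := by
  have := hQ.lt_pq; have := hQ.lt_qr; have := hQ.lt_rs; have := ZMod.val_lt s
  obtain ⟨hpq, hqr, hrs, hsp⟩ := hQ.sides_mem_flipAt r p
  -- seen from `q`, the quadrilateral reads `q r s p`
  have hpos : ∀ x : ZMod (2 * d + 2), (x - q).val = if q.val ≤ x.val then x.val - q.val
      else x.val + (2 * d + 2) - q.val := fun x => val_sub_eq_ite q x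
  refine eq_pair_of_crosses_of_lt (o := q) (by rw [hpos, hpos]; split_ifs <;> omega)
    (by rw [hpos, hpos]; split_ifs <;> omega) (by rw [hpos, hpos]; split_ifs <;> omega) hc
    (fun h' => h _ hqr h'.symm) (fun h' => h _ hrs h'.symm)
    (fun h' => h _ hsp h'.symm) (fun h' => h _ hpq (Finset.pair_comm q p ▸ h'.symm))

lemma IsQuadrilateral.mem_flipAt_of_forall_not_crosses (hT : IsCST (2 * d + 2) T)
    (hQ : IsQuadrilateral (2 * d + 2) T p q r s) {e : Finset (ZMod (2 * d + 2))}
    (he : IsEdge (2 * d + 2) e)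
    (h : ∀ f ∈ flipAt (2 * d + 2) T q s r p, ¬ Crosses (2 * d + 2) e f) :
    e ∈ flipAt (2 * d + 2) T q s r p := by
  have hg : {r, p} ∈ flipAt (2 * d + 2) T q s r p := mem_flipAt.mpr (Or.inr (Or.inl rfl))
  obtain ⟨u, v, huv, rfl⟩ := he
  by_cases heT : {u, v} ∈ T
  · refine mem_flipAt.mpr (Or.inl ⟨heT, ?_, ?_⟩)
    · rintro heq
      exact h _ hg (heq ▸ hQ.crosses.symm)
    · rintro heq
      refine h _ (mem_flipAt.mpr (Or.inr (Or.inr rfl))) (heq ▸ ?_)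
      exact ((crosses_opp_iff _ _ _ _).mpr hQ.crosses).symm
  obtain ⟨f, hf, hc⟩ : ∃ f ∈ T, Crosses (2 * d + 2) {u, v} f := by
    by_contra! hno
    exact heT (hT.1.mem_of_forall_not_crosses ⟨u, v, huv, rfl⟩ hno)
  rw [mem_flipAt]
  by_cases hf₁ : f = {q, s}
  · exact Or.inr (Or.inl (hQ.eq_of_crosses_of_forall_not_crosses h (hf₁ ▸ hc.symm)))
  by_cases hf₂ : f = {opp (2 * d + 2) q, opp (2 * d + 2) s}
  · refine Or.inr (Or.inr (opp_pair_eq_iff.mp (hQ.eq_of_crosses_of_forall_not_crosses ?_ ?_)))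
    · intro f' hf' hc'
      obtain ⟨-, x, y, rfl⟩ := hc'.exists_eq_pair
      rw [← crosses_opp_iff, opp_opp, opp_opp] at hc'
      exact h _ (isCS_flipAt hT.2 q s r p x y hf') hc'
    · rw [← crosses_opp_iff, opp_opp, opp_opp, ← hf₂]
      exact hc.symm
  · exact absurd hc (h f (mem_flipAt.mpr (Or.inl ⟨hf, hf₁, hf₂⟩)))

lemma IsQuadrilateral.not_isBoundaryEdge {n : ℕ} [NeZero n] {T : Set (Finset (ZMod n))}
    {p q r s : ZMod n} (hQ : IsQuadrilateral n T p q r s) : ¬ IsBoundaryEdge n {q, s} := by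
  have := hQ.lt_pq; have := hQ.lt_qr; have := hQ.lt_rs; have := ZMod.val_lt s
  have : Fact (1 < n) := ⟨by omega⟩
  rintro ⟨x, hx⟩
  have hx1 := val_add_one x
  rcases pair_eq_pair_iff.mp hx with ⟨rfl, rfl⟩ | ⟨rfl, rfl⟩ <;> split_ifs at hx1 <;> omega

lemma IsQuadrilateral.isFlip_flipAt (hT : IsCST (2 * d + 2) T)
    (hQ : IsQuadrilateral (2 * d + 2) T p q r s) :
    IsFlip (2 * d + 2) T (flipAt (2 * d + 2) T q s r p) := by
  have hrp : r ≠ p := ne_of_apply_ne ZMod.val (by have := hQ.lt_pq; have := hQ.lt_qr; omega)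
  have hedge : ∀ e ∈ flipAt (2 * d + 2) T q s r p, IsEdge (2 * d + 2) e := by
    intro e he
    rcases mem_flipAt.mp he with ⟨he, -, -⟩ | rfl | rfl
    · exact hT.1.1 e he
    · exact ⟨r, p, hrp, rfl⟩
    · exact ⟨_, _, fun h => hrp (by rw [← opp_opp r, h, opp_opp]), rfl⟩
  refine ⟨hT, ⟨⟨hedge, hQ.pairwise_not_crosses_flipAt hT,
    fun e he h => hQ.mem_flipAt_of_forall_not_crosses hT he fun f hf => (h f hf).1⟩,
    isCS_flipAt hT.2 q s r p⟩, q, s, r, p, hQ.not_isBoundaryEdge, hQ.mem_qs, hQ.mem_qr,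
    hQ.mem_rs, hQ.mem_sp, hQ.mem_pq, rfl⟩

lemma IsQuadrilateral.adj_flipAt (hT : IsCST (2 * d + 2) T)
    (hQ : IsQuadrilateral (2 * d + 2) T p q r s) :
    (flipGraph (2 * d + 2)).Adj T (flipAt (2 * d + 2) T q s r p) := by
  refine (SimpleGraph.fromRel_adj _ _ _).mpr ⟨fun h => ?_, Or.inl (hQ.isFlip_flipAt hT)⟩
  have hg : {r, p} ∈ flipAt (2 * d + 2) T q s r p := mem_flipAt.mpr (Or.inr (Or.inl rfl))
  exact hT.1.2.1 _ (h ▸ hg) _ hQ.mem_qs hQ.crosses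

end FlipCS

section Comb

variable {d : ℕ} {T : Set (Finset (ZMod (2 * d + 2)))}

lemma boundary_mem_uminusSet (x : ZMod (2 * d + 2)) : {x, x + 1} ∈ UminusSet d :=
  Or.inl ⟨x, rfl⟩

lemma diag_mem_uminusSet : {0, opp (2 * d + 2) 0} ∈ UminusSet d :=
  Or.inr (Or.inl (Or.inl rfl))

lemma spoke_mem_uminusSet {v : ℕ} (hv : 2 ≤ v) (hvd : v ≤ d) :
    {0, (v : ZMod (2 * d + 2))} ∈ UminusSet d :=
  Or.inr (Or.inl (Or.inr ⟨v, hv, hvd, rfl⟩))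

lemma image_opp_pair (x y : ZMod (2 * d + 2)) :
    ({x, y} : Finset (ZMod (2 * d + 2))).image (opp (2 * d + 2)) =
      {opp (2 * d + 2) x, opp (2 * d + 2) y} := by
  simp [Finset.image_insert]

lemma isCS_uminusSet : IsCS (2 * d + 2) (UminusSet d) := by
  rintro x y (⟨z, hz⟩ | hS | ⟨s, hS, hs⟩)
  · rcases pair_eq_pair_iff.mp hz with ⟨rfl, rfl⟩ | ⟨rfl, rfl⟩
    · exact Or.inl ⟨opp (2 * d + 2) x, by rw [opp_eq_add, opp_eq_add, add_right_comm]⟩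
    · exact Or.inl ⟨opp (2 * d + 2) y, by
        rw [opp_eq_add, opp_eq_add, add_right_comm, Finset.pair_comm]⟩
  · exact Or.inr (Or.inr ⟨_, hS, image_opp_pair x y⟩)
  · refine Or.inr (Or.inl ?_)
    rw [← image_opp_pair, ← hs, Finset.image_image]
    simpa [Function.comp_def, opp_opp] using hS

lemma uminusSet_subset (hT : IsCST (2 * d + 2) T) (hdiag : {0, opp (2 * d + 2) 0} ∈ T)
    (hspokes : ∀ v : ℕ, 2 ≤ v → v ≤ d → {0, (v : ZMod (2 * d + 2))} ∈ T) :
    UminusSet d ⊆ T := by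
  rintro e (⟨x, rfl⟩ | (rfl | ⟨v, hv, hvd, rfl⟩) |
    ⟨s, (rfl | ⟨v, hv, hvd, rfl⟩), rfl⟩)
  · exact hT.1.boundary_mem x
  · exact hdiag
  · exact hspokes v hv hvd
  · simpa only [image_opp_pair] using hT.2 _ _ hdiag
  · simpa only [image_opp_pair] using hT.2 _ _ (hspokes v hv hvd)

lemma mem_uminusSet_of_forall_not_crosses_of_val_le {x y : ZMod (2 * d + 2)}
    (hxy : x.val < y.val) (hy : y.val ≤ d + 1)
    (h : ∀ f ∈ UminusSet d, ¬ Crosses (2 * d + 2) {x, y} f) : {x, y} ∈ UminusSet d := by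
  by_cases hxy₁ : y.val = x.val + 1
  · obtain rfl : y = x + 1 := ZMod.val_injective _ (by rw [val_add_one, if_neg (by omega)]; omega)
    exact boundary_mem_uminusSet x
  rcases Nat.eq_zero_or_pos x.val with hx | hx
  · obtain rfl : x = 0 := (ZMod.val_eq_zero x).mp hx
    by_cases hyd : y.val ≤ d
    · simpa using spoke_mem_uminusSet (d := d) (v := y.val) (by omega) hyd
    · obtain rfl : y = opp (2 * d + 2) 0 :=
        ZMod.val_injective _ (by rw [opp_val, if_pos (by simp)]; simp; omega)
      exact diag_mem_uminusSet
  · have hval : ((x.val + 1 : ℕ) : ZMod (2 * d + 2)).val = x.val + 1 :=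
      ZMod.val_natCast_of_lt (by omega)
    refine absurd ((crosses_pair_iff_of_val_lt _ _ hxy).mpr ?_)
      (h _ (spoke_mem_uminusSet (v := x.val + 1) (by omega) (by omega)))
    simp only [hval, ZMod.val_zero]
    omega

lemma mem_uminusSet_of_forall_not_crosses {x y : ZMod (2 * d + 2)} (hxy : x ≠ y)
    (h : ∀ f ∈ UminusSet d, ¬ Crosses (2 * d + 2) {x, y} f) : {x, y} ∈ UminusSet d := by
  wlog hlt : x.val < y.val generalizing x y
  · rw [Finset.pair_comm] at h ⊢
    exact this hxy.symm h
      (lt_of_le_of_ne (not_lt.mp hlt) fun h' => hxy (ZMod.val_injective _ h'.symm))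
  have hy := ZMod.val_lt y
  have ho0 : (opp (2 * d + 2) (0 : ZMod (2 * d + 2))).val = d + 1 := by simp [opp_val]
  by_cases hyd : y.val ≤ d + 1
  · exact mem_uminusSet_of_forall_not_crosses_of_val_le hlt hyd h
  rcases Nat.eq_zero_or_pos x.val with hx | hx
  · obtain rfl : x = 0 := (ZMod.val_eq_zero x).mp hx
    by_cases hy' : y.val = 2 * d + 1
    · have : (0 : ZMod (2 * d + 2)) = y + 1 :=
        ZMod.val_injective _ (by rw [val_add_one, if_pos (by omega)]; simp)
      rw [this, Finset.pair_comm]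
      exact boundary_mem_uminusSet y
    have hval : (opp (2 * d + 2) ((y.val - d : ℕ) : ZMod (2 * d + 2))).val = y.val + 1 := by
      rw [opp_val, ZMod.val_natCast_of_lt (by omega), if_pos (by omega)]
      omega
    refine absurd ((crosses_pair_iff_of_val_lt _ _ hlt).mpr ?_)
      (h _ (isCS_uminusSet _ _ (spoke_mem_uminusSet (v := y.val - d) (by omega) (by omega))))
    simp only [hval, ho0, ZMod.val_zero]
    omega
  by_cases hxd : x.val ≤ d
  · refine absurd ((crosses_pair_iff_of_val_lt _ _ hlt).mpr ?_) (h _ diag_mem_uminusSet)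
    simp only [ho0, ZMod.val_zero]
    omega
  -- otherwise the opposite edge lies in the range treated above
  have hopp : {opp (2 * d + 2) x, opp (2 * d + 2) y} ∈ UminusSet d := by
    refine mem_uminusSet_of_forall_not_crosses_of_val_le
      (by simp only [opp_val]; split_ifs <;> omega) (by simp only [opp_val]; split_ifs <;> omega)
      fun f hf hc => ?_
    obtain ⟨-, u, v, rfl⟩ := hc.exists_eq_pair
    rw [← opp_opp u, ← opp_opp v, crosses_opp_iff] at hc
    exact h _ (isCS_uminusSet u v hf) hc
  simpa only [opp_opp] using isCS_uminusSet _ _ hopp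

lemma eq_uminusSet (hT : IsCST (2 * d + 2) T) (hdiag : {0, opp (2 * d + 2) 0} ∈ T)
    (hspokes : ∀ v : ℕ, 2 ≤ v → v ≤ d → {0, (v : ZMod (2 * d + 2))} ∈ T) :
    T = UminusSet d := by
  have hsub := uminusSet_subset hT hdiag hspokes
  refine Set.Subset.antisymm (fun e he => ?_) hsub
  obtain ⟨x, y, hxy, rfl⟩ := hT.1.1 e he
  exact mem_uminusSet_of_forall_not_crosses hxy fun f hf => hT.1.2.1 _ he _ (hsub hf)

end Comb

section Reduction

open Classical in
noncomputable def missingSpokes (d : ℕ) (T : Set (Finset (ZMod (2 * d + 2)))) : Finset ℕ :=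
  (Finset.Icc 2 d).filter fun v => ({0, (v : ZMod (2 * d + 2))} : Finset (ZMod (2 * d + 2))) ∉ T

variable {d : ℕ} {T : Set (Finset (ZMod (2 * d + 2)))}

lemma mem_missingSpokes {v : ℕ} :
    v ∈ missingSpokes d T ↔ (2 ≤ v ∧ v ≤ d) ∧ {0, (v : ZMod (2 * d + 2))} ∉ T := by
  simp [missingSpokes]

lemma exists_isQuadrilateral_of_nonempty (hT : IsCST (2 * d + 2) T)
    (hdiag : {0, opp (2 * d + 2) 0} ∈ T) (hne : (missingSpokes d T).Nonempty) :
    ∃ a w z : ZMod (2 * d + 2), IsQuadrilateral (2 * d + 2) T 0 a w z ∧ z.val ≤ d + 1 := by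
  obtain ⟨k, hk, hmin⟩ := (missingSpokes d T).exists_min_image id hne
  obtain ⟨⟨hk2, hkd⟩, hk⟩ := mem_missingSpokes.mp hk
  obtain ⟨a, ha, h0a⟩ : ∃ a : ZMod (2 * d + 2), a.val = k - 1 ∧ {0, a} ∈ T := by
    refine ⟨((k - 1 : ℕ) : ZMod (2 * d + 2)), ZMod.val_natCast_of_lt (by omega), ?_⟩
    rcases eq_or_lt_of_le hk2 with rfl | hk2
    · simpa using hT.1.boundary_mem 0
    · by_contra h
      have := hmin _ (mem_missingSpokes.mpr ⟨⟨by omega, by omega⟩, h⟩)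
      simp only [id] at this
      omega
  have hpos0 : (0 - 0 : ZMod (2 * d + 2)).val < (a - 0).val := by simp [ha]; omega
  obtain ⟨z, haz0, haz, hz0⟩ := hT.1.exists_apex (Finset.pair_comm a 0 ▸ h0a)
    (by rw [val_sub_eq_ite, ha, ZMod.val_zero]; split_ifs <;> omega)
  rw [sbtw_rev_iff_of_lt z hpos0] at haz0
  simp only [sub_zero, ZMod.val_zero, ha] at haz0
  have hzk : z.val ≠ k := fun h => hk (by
    rwa [show ((k : ℕ) : ZMod (2 * d + 2)) = z by rw [← h, ZMod.natCast_zmod_val],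
      Finset.pair_comm])
  have hzd : z.val ≤ d + 1 := by
    by_contra! hzd
    refine hT.1.2.1 _ haz _ hdiag ((crosses_pair_iff_of_val_lt _ _ (by omega)).mpr ?_)
    simp only [ZMod.val_zero, opp_val, zero_le, if_true]
    omega
  have hpos : (a - 0).val < (z - 0).val := by simp only [sub_zero]; omega
  obtain ⟨w, haw_z, haw, hwz⟩ := hT.1.exists_apex haz
    (by rw [val_sub_eq_ite, ha]; split_ifs <;> omega)
  rw [sbtw_iff_of_lt w hpos] at haw_z
  simp only [sub_zero, ha] at haw_z
  exact ⟨a, w, z, ⟨by simp [ha]; omega, by omega, haw_z.2, h0a, haw, hwz, hz0, haz⟩, hzd⟩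

lemma exists_adj_missingSpokes_ssubset (hT : IsCST (2 * d + 2) T)
    (hdiag : {0, opp (2 * d + 2) 0} ∈ T) (hne : (missingSpokes d T).Nonempty) :
    ∃ T', (flipGraph (2 * d + 2)).Adj T T' ∧ IsCST (2 * d + 2) T' ∧
      {0, opp (2 * d + 2) 0} ∈ T' ∧ missingSpokes d T' ⊂ missingSpokes d T := by
  obtain ⟨a, w, z, hQ, hzd⟩ := exists_isQuadrilateral_of_nonempty hT hdiag hne
  have h0a : 0 < a.val := by simpa using hQ.lt_pq
  have := hQ.lt_qr; have := hQ.lt_rs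
  have ha : (opp (2 * d + 2) a).val = a.val + (d + 1) := by rw [opp_val, if_pos (by omega)]
  have h0 : (opp (2 * d + 2) (0 : ZMod (2 * d + 2))).val = d + 1 := by simp [opp_val]
  have hw : {0, w} ∈ flipAt (2 * d + 2) T a z w 0 :=
    Finset.pair_comm w 0 ▸ mem_flipAt.mpr (Or.inr (Or.inl rfl))
  refine ⟨_, hQ.adj_flipAt hT, (hQ.isFlip_flipAt hT).2.1, mem_flipAt.mpr (Or.inl ⟨hdiag,
    pair_ne_pair_of_val (by simp only [ZMod.val_zero]; omega),
    pair_ne_pair_of_val (by simp only [ZMod.val_zero, ha, h0]; omega)⟩), ?_⟩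
  refine (Finset.ssubset_iff_of_subset fun v hv => ?_).mpr ⟨w.val, ?_, ?_⟩
  · obtain ⟨⟨hv2, hvd⟩, hv⟩ := mem_missingSpokes.mp hv
    have hval : ((v : ℕ) : ZMod (2 * d + 2)).val = v := ZMod.val_natCast_of_lt (by omega)
    refine mem_missingSpokes.mpr ⟨⟨hv2, hvd⟩, fun h => hv (mem_flipAt.mpr (Or.inl ⟨h,
      pair_ne_pair_of_val (by simp only [ZMod.val_zero]; omega),
      pair_ne_pair_of_val (by simp only [ZMod.val_zero, hval, ha]; omega)⟩))⟩
  · refine mem_missingSpokes.mpr ⟨⟨by omega, by omega⟩, fun h => ?_⟩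
    rw [ZMod.natCast_zmod_val, Finset.pair_comm] at h
    exact hT.1.2.1 _ h _ hQ.mem_qs hQ.crosses
  · rw [mem_missingSpokes, ZMod.natCast_zmod_val]
    exact fun h => h.2 hw

end Reduction

lemma exists_walk_uminusSet_length_le {d : ℕ} {T : Set (Finset (ZMod (2 * d + 2)))}
    (hT : IsCST (2 * d + 2) T) (hdiag : {0, opp (2 * d + 2) 0} ∈ T) :
    ∃ W : (flipGraph (2 * d + 2)).Walk T (UminusSet d),
      W.length ≤ (missingSpokes d T).card := by
  by_cases hne : (missingSpokes d T).Nonempty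
  · obtain ⟨T', hadj, hT', hdiag', hsub⟩ := exists_adj_missingSpokes_ssubset hT hdiag hne
    obtain ⟨W, hW⟩ := exists_walk_uminusSet_length_le hT' hdiag'
    refine ⟨.cons hadj W, ?_⟩
    have := Finset.card_lt_card hsub
    rw [SimpleGraph.Walk.length_cons]
    omega
  · obtain rfl : T = UminusSet d := eq_uminusSet hT hdiag fun v hv hvd => by
      by_contra h
      exact hne ⟨v, mem_missingSpokes.mpr ⟨⟨hv, hvd⟩, h⟩⟩
    exact ⟨.nil, by simp⟩
termination_by (missingSpokes d T).card
decreasing_by exact Finset.card_lt_card hsub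

theorem comb_upper_bound_general (d : ℕ)
    (T : Set (Finset (ZMod (2 * d + 2)))) (hT : IsCST (2 * d + 2) T)
    (hdiag : ({(0 : ZMod (2 * d + 2)), opp (2 * d + 2) 0} : Finset (ZMod (2 * d + 2))) ∈ T) :
    (flipGraph (2 * d + 2)).Reachable T (UminusSet d) ∧
      delta (2 * d + 2) T (UminusSet d) ≤ d - 1 := by
  obtain ⟨W, hW⟩ := exists_walk_uminusSet_length_le hT hdiag
  have hcard : (missingSpokes d T).card ≤ d - 1 :=
    (Finset.card_le_card fun v hv => Finset.mem_Icc.mpr (mem_missingSpokes.mp hv).1).trans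
      (by rw [Nat.card_Icc]; omega)
  exact ⟨W.reachable, (SimpleGraph.dist_le W).trans (hW.trans hcard)⟩

/-- any centrally symmetric triangulation containing the diagonal
`{0,0̄}` can be transformed into the double comb `U⁻` (whose interior edges are `{0,0̄}`,
`{0,x}` for `2 ≤ x ≤ d` and `{0̄,x̄}` for `2 ≤ x ≤ d`) by at most `d - 1` flips. -/
theorem comb_upper_bound (d : ℕ) (hd : 1 ≤ d)
    (T : Set (Finset (ZMod (2 * d + 2)))) (hT : IsCST (2 * d + 2) T)
    (hdiag : ({(0 : ZMod (2 * d + 2)), opp (2 * d + 2) 0} : Finset (ZMod (2 * d + 2))) ∈ T) :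
    (flipGraph (2 * d + 2)).Reachable T (UminusSet d) ∧
      delta (2 * d + 2) T (UminusSet d) ≤ d - 1 :=
  comb_upper_bound_general d T hT hdiag

end Cyclo
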